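/- For all nonnegative integers n, p and real x, λ, one has the identity Σ_{k=0}^{∞} Σ_{m=0}^{∞} (x+k)_{n,λ}/k! · (-1)^m/(m! C(m+k+p, p)) = Σ_{m=0}^{n} Σ_{k=0}^{m} C(n,m)/C(p+k,k) · S_{2,λ}(m,k) (x)_{n-m,λ}, where the double series on the left converges absolutely. -/

import Mathlib

open Finset

def degFall (l x : ℝ) (n : ℕ) : ℝ := ∏ i ∈ Finset.range n, (x - i * l)

def fall (x : ℝ) (n : ℕ) : ℝ := ∏ i ∈ Finset.range n, (x - i)

/-! Expanding `(x + k)_{n,λ}` by the degenerate binomial theorem and then `(k)_{m,λ}` in the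
falling factorials `(k)_j` reduces the double series to the kernels
`∑ (k)_j / k! · (-1)^m / (m! · C(m + k + p, p))`. Shifting `k = i + j` turns `(k)_j / k!` into
`1 / i!`, and summing along the diagonals `i + m = s`, the inner sum
`∑_{i + m = s} (-1)^m / (i! m!) = (1 - 1)^s / s!` vanishes for every `s > 0`, which leaves
`1 / C(p + j, j)`. Each kernel is dominated by `1 / (i! m!)`, so the series, a finite combination
of kernels, converges absolutely. -/

open Nat

theorem degFall_succ (l x : ℝ) (n : ℕ) : degFall l x (n + 1) = degFall l x n * (x - n * l) :=
  prod_range_succ _ _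

theorem degFall_add (l x y : ℝ) (n : ℕ) :
    degFall l (x + y) n =
      ∑ ij ∈ antidiagonal n, (n.choose ij.1 : ℝ) * (degFall l x ij.1 * degFall l y ij.2) := by
  induction n with
  | zero => simp [degFall]
  | succ n ih =>
    rw [sum_antidiagonal_choose_succ_mul (fun i j => degFall l x i * degFall l y j), degFall_succ,
      ih, sum_mul, ← sum_add_distrib]
    refine sum_congr rfl fun ij hij => ?_
    rw [HasAntidiagonal.mem_antidiagonal] at hij
    have hn : (n : ℝ) = ij.1 + ij.2 := by exact_mod_cast hij.symm
    rw [← Nat.choose_symm_of_eq_add hij.symm, degFall_succ, degFall_succ, hn]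
    ring

theorem fall_natCast (k j : ℕ) : fall k j = k.descFactorial j := by
  rw [fall, ← descPochhammer_eval_eq_prod_range, descPochhammer_eval_eq_descFactorial]

theorem Summable.tsum_eq_tsum_sum_antidiagonal {A α : Type*} [AddCommMonoid A] [HasAntidiagonal A]
    [AddCommMonoid α] [TopologicalSpace α] [ContinuousAdd α] [T3Space α]
    {f : A × A → α} (hf : Summable f) :
    ∑' x, f x = ∑' n, ∑ x ∈ antidiagonal n, f x := by
  conv_rhs => congr; ext; rw [← Finset.sum_finset_coe, ← tsum_fintype (L := .unconditional _)]
  rw [← HasAntidiagonal.sigmaAntidiagonalEquivProd.tsum_eq f]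
  exact (HasAntidiagonal.sigmaAntidiagonalEquivProd.summable_iff.mpr hf).tsum_sigma'
    fun n ↦ (hasSum_fintype _).summable

theorem sum_antidiagonal_inv_factorial_mul_neg_one_pow_div_factorial (s : ℕ) :
    ∑ x ∈ antidiagonal s, ((x.1 ! : ℝ))⁻¹ * ((-1) ^ x.2 / x.2 !) = 0 ^ s := by
  have hs : (s ! : ℝ) ≠ 0 := by positivity
  calc ∑ x ∈ antidiagonal s, ((x.1 ! : ℝ))⁻¹ * ((-1) ^ x.2 / x.2 !)
      = (∑ x ∈ antidiagonal s, s.choose x.1 • ((1 : ℝ) ^ x.1 * (-1) ^ x.2)) / s ! := by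
        rw [sum_div]
        refine sum_congr rfl fun x hx => ?_
        rw [HasAntidiagonal.mem_antidiagonal] at hx
        subst hx
        rw [nsmul_eq_mul, Nat.cast_add_choose]
        field_simp
        simp
    _ = 0 ^ s := by
        rw [← (Commute.all _ _).add_pow', add_neg_cancel]
        rcases s with _ | s <;> simp

section Kernel

variable {g : ℕ → ℝ} {C : ℝ}

theorem summable_inv_factorial_mul_neg_one_pow_div_factorial_mul (hg : ∀ s, |g s| ≤ C) :
    Summable fun x : ℕ × ℕ => ((x.1 ! : ℝ))⁻¹ * ((-1) ^ x.2 / x.2 !) * g (x.1 + x.2) := by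
  have hinv : Summable fun n : ℕ => ((n ! : ℝ))⁻¹ := by
    simpa using Real.summable_pow_div_factorial 1
  refine Summable.of_norm_bounded ((hinv.mul_of_nonneg hinv (fun _ => by positivity)
    (fun _ => by positivity)).mul_left C) fun x => ?_
  rw [Real.norm_eq_abs, abs_mul, abs_mul, abs_div, abs_pow, abs_neg, abs_one, one_pow]
  simp only [Nat.abs_cast, abs_inv]
  have := hg (x.1 + x.2)
  calc _ ≤ (x.1 ! : ℝ)⁻¹ * (1 / x.2 !) * C := by gcongr
    _ = _ := by ring

theorem tsum_inv_factorial_mul_neg_one_pow_div_factorial_mul (hg : ∀ s, |g s| ≤ C) :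
    ∑' x : ℕ × ℕ, ((x.1 ! : ℝ))⁻¹ * ((-1) ^ x.2 / x.2 !) * g (x.1 + x.2) = g 0 := by
  rw [(summable_inv_factorial_mul_neg_one_pow_div_factorial_mul hg).tsum_eq_tsum_sum_antidiagonal]
  have hfiber : ∀ s, ∑ x ∈ antidiagonal s, ((x.1 ! : ℝ))⁻¹ * ((-1) ^ x.2 / x.2 !) * g (x.1 + x.2)
      = 0 ^ s * g s := by
    intro s
    rw [← sum_antidiagonal_inv_factorial_mul_neg_one_pow_div_factorial, sum_mul]
    refine sum_congr rfl fun x hx => ?_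
    rw [HasAntidiagonal.mem_antidiagonal.mp hx]
  simp_rw [hfiber]
  rw [tsum_eq_single 0 fun s hs => by simp [hs]]
  simp

end Kernel

noncomputable def dobinskiWeight (p : ℕ) (km : ℕ × ℕ) : ℝ :=
  (-1) ^ km.2 / (km.2 ! * ((km.2 + km.1 + p).choose p : ℕ))

section DescFactorial

variable (p j : ℕ)

theorem injective_add_fst : Function.Injective fun x : ℕ × ℕ => (x.1 + j, x.2) :=
  fun a b h => by simpa [Prod.ext_iff] using h

theorem descFactorial_div_factorial_mul_dobinskiWeight_of_notMem_range {km : ℕ × ℕ}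
    (h : km ∉ Set.range fun x : ℕ × ℕ => (x.1 + j, x.2)) :
    (km.1.descFactorial j : ℝ) / km.1 ! * dobinskiWeight p km = 0 := by
  have hlt : km.1 < j := by
    by_contra! hle
    exact h ⟨(km.1 - j, km.2), by simp [Nat.sub_add_cancel hle]⟩
  simp [Nat.descFactorial_eq_zero_iff_lt.mpr hlt]

theorem descFactorial_div_factorial_mul_dobinskiWeight_add (x : ℕ × ℕ) :
    ((x.1 + j).descFactorial j : ℝ) / (x.1 + j) ! * dobinskiWeight p (x.1 + j, x.2) =
      ((x.1 ! : ℝ))⁻¹ * ((-1) ^ x.2 / x.2 !) * (((x.1 + x.2 + (j + p)).choose p : ℕ) : ℝ)⁻¹ := by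
  have hfac : ((x.1 + j) ! : ℝ) = x.1 ! * (x.1 + j).descFactorial j := by
    have := Nat.factorial_mul_descFactorial (Nat.le_add_left j x.1)
    rw [Nat.add_sub_cancel] at this
    exact_mod_cast this.symm
  have hidx : x.2 + (x.1 + j) + p = x.1 + x.2 + (j + p) := by ring
  have hdesc : ((x.1 + j).descFactorial j : ℝ) ≠ 0 := by
    exact_mod_cast (Nat.descFactorial_pos.mpr (Nat.le_add_left j x.1)).ne'
  rw [dobinskiWeight, hfac, hidx]
  field_simp

theorem abs_inv_choose_le_one (s : ℕ) : |(((s + (j + p)).choose p : ℕ) : ℝ)⁻¹| ≤ 1 := by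
  have : (1 : ℝ) ≤ ((s + (j + p)).choose p : ℕ) := by
    exact_mod_cast Nat.choose_pos (by omega)
  rw [abs_of_nonneg (by positivity)]
  exact inv_le_one_of_one_le₀ this

theorem summable_descFactorial_div_factorial_mul_dobinskiWeight :
    Summable fun km : ℕ × ℕ => (km.1.descFactorial j : ℝ) / km.1 ! * dobinskiWeight p km := by
  refine ((injective_add_fst j).summable_iff
    fun km => descFactorial_div_factorial_mul_dobinskiWeight_of_notMem_range p j).mp ?_
  simp only [Function.comp_def, descFactorial_div_factorial_mul_dobinskiWeight_add]
  exact summable_inv_factorial_mul_neg_one_pow_div_factorial_mul (abs_inv_choose_le_one p j)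

theorem tsum_descFactorial_div_factorial_mul_dobinskiWeight :
    ∑' km : ℕ × ℕ, (km.1.descFactorial j : ℝ) / km.1 ! * dobinskiWeight p km =
      (((p + j).choose j : ℕ) : ℝ)⁻¹ := by
  rw [← (injective_add_fst j).tsum_eq fun km hkm => by_contra fun h =>
    hkm (descFactorial_div_factorial_mul_dobinskiWeight_of_notMem_range p j h)]
  simp only [descFactorial_div_factorial_mul_dobinskiWeight_add]
  rw [tsum_inv_factorial_mul_neg_one_pow_div_factorial_mul (abs_inv_choose_le_one p j),
    zero_add, add_comm j p, Nat.choose_symm_add]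

end DescFactorial

theorem degFall_add_natCast (l x : ℝ) (n k : ℕ) (S2 : ℕ → ℕ → ℝ)
    (hS : ∀ m, degFall l k m = ∑ j ∈ range (m + 1), S2 m j * fall k j) :
    degFall l (x + k) n = ∑ m ∈ range (n + 1), ∑ j ∈ range (m + 1),
      (n.choose m : ℝ) * S2 m j * degFall l x (n - m) * k.descFactorial j := by
  rw [add_comm, degFall_add, Nat.sum_antidiagonal_eq_sum_range_succ
    (fun i j => (n.choose i : ℝ) * (degFall l k i * degFall l x j))]
  refine sum_congr rfl fun m _ => ?_
  rw [hS, sum_mul, mul_sum]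
  refine sum_congr rfl fun j _ => ?_
  rw [fall_natCast]
  ring

theorem dobinski_like_modified_Bell
    (l x : ℝ) (n p : ℕ)
    (S2 : ℕ → ℕ → ℝ)
    (hS : ∀ (y : ℝ) (m : ℕ),
      degFall l y m = ∑ k ∈ Finset.range (m + 1), S2 m k * fall y k) :
    Summable (fun km : ℕ × ℕ =>
      |degFall l (x + km.1) n / (km.1.factorial : ℝ) *
        ((-1 : ℝ) ^ km.2 / ((km.2.factorial : ℝ) *
          (((km.2 + km.1 + p).choose p : ℕ) : ℝ)))|) ∧
    (∑' km : ℕ × ℕ,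
        degFall l (x + km.1) n / (km.1.factorial : ℝ) *
          ((-1 : ℝ) ^ km.2 / ((km.2.factorial : ℝ) *
            (((km.2 + km.1 + p).choose p : ℕ) : ℝ))))
      = ∑ m ∈ Finset.range (n + 1), ∑ k ∈ Finset.range (m + 1),
          ((n.choose m : ℕ) : ℝ) / (((p + k).choose k : ℕ) : ℝ) *
            S2 m k * degFall l x (n - m) := by
  set T : ℕ → ℕ × ℕ → ℝ := fun j km => (km.1.descFactorial j : ℝ) / km.1 ! * dobinskiWeight p km
  have hT : ∀ j, Summable (T j) := summable_descFactorial_div_factorial_mul_dobinskiWeight p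
  have hterm : ∀ km : ℕ × ℕ, degFall l (x + km.1) n / km.1 ! * dobinskiWeight p km =
      ∑ m ∈ range (n + 1), ∑ j ∈ range (m + 1),
        (n.choose m : ℝ) * S2 m j * degFall l x (n - m) * T j km := by
    intro km
    simp only [degFall_add_natCast l x n km.1 S2 (hS km.1), sum_div, sum_mul, T]
    refine sum_congr rfl fun m _ => sum_congr rfl fun j _ => ?_
    ring
  have hsum : ∀ m, Summable fun km => ∑ j ∈ range (m + 1),
      (n.choose m : ℝ) * S2 m j * degFall l x (n - m) * T j km :=
    fun m => summable_sum fun j _ => (hT j).mul_left _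
  change Summable (fun km => |degFall l (x + km.1) n / km.1 ! * dobinskiWeight p km|) ∧
    ∑' km, degFall l (x + km.1) n / km.1 ! * dobinskiWeight p km = _
  simp only [hterm]
  refine ⟨summable_abs_iff.mpr (summable_sum fun m _ => hsum m), ?_⟩
  rw [Summable.tsum_finsetSum fun m _ => hsum m]
  refine sum_congr rfl fun m _ => ?_
  rw [Summable.tsum_finsetSum fun j _ => (hT j).mul_left _]
  refine sum_congr rfl fun j _ => ?_
  rw [tsum_mul_left, tsum_descFactorial_div_factorial_mul_dobinskiWeight]
  ring
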